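/- Best reply of player x when overtaking is impossible (case b of Theorem 2, third branch of B_x): assume pλ > 0, 0 < d0 := d_x(x0, y0) < d < d_y(x0, y0), where d = T·(v_max − v_min) and v_min < v_max. Let v_y ∈ Γ with v_y > v_max − d0/T. Then for every w ∈ Γ, u_x(x0, w, y0, v_y) ≤ u_x(x0, v_min, y0, v_y), with equality if and only if w = v_min; i.e., v_min is the unique best reply of player x to v_y. -/
import Mathlib


/-- The reduction of a real number `r` modulo the circuit length `D`: the relative
position on the torus, `(r) mod D = r − D·⌊r/D⌋ ∈ [0, D)`. -/
noncomputable def modD (D r : ℝ) : ℝ := r - D * (⌊r / D⌋ : ℝ)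

/-- The directed (clockwise) distance from `x` to `y` on the circuit of length `D`. -/
noncomputable def dirX (D x y : ℝ) : ℝ := if x ≤ y then y - x else D + y - x

/-- The directed (clockwise) distance from `y` to `x` on the circuit of length `D`. -/
noncomputable def dirY (D x y : ℝ) : ℝ := dirX D y x

/-- Utility of player x: starting from `x0` and `y0`, driving at speeds `vx`, `vy`
for time `T`, with fare `p`, passenger rate `lam` and cost rate `c`. -/
noncomputable def uX (D p lam c T x0 y0 vx vy : ℝ) : ℝ :=
  if modD D (x0 + T * vx) ≠ modD D (y0 + T * vy) then
    p * lam * dirX D (modD D (x0 + T * vx)) (modD D (y0 + T * vy)) - c * T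
  else p * lam * (D / 2) - c * T

/-- Utility of player y, defined like `uX` with the directed distance `dirY`. -/
noncomputable def uY (D p lam c T x0 y0 vx vy : ℝ) : ℝ :=
  if modD D (x0 + T * vx) ≠ modD D (y0 + T * vy) then
    p * lam * dirY D (modD D (x0 + T * vx)) (modD D (y0 + T * vy)) - c * T
  else p * lam * (D / 2) - c * T

lemma modD_eq_self {D r : ℝ} (hD : 0 < D) (h0 : 0 ≤ r) (h1 : r < D) : modD D r = r := by
  have hf : ⌊r / D⌋ = 0 := by
    rw [Int.floor_eq_zero_iff]
    exact ⟨div_nonneg h0 hD.le, (div_lt_one hD).mpr h1⟩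
  simp [modD, hf]

lemma modD_add_int {D : ℝ} (hD : 0 < D) (r : ℝ) (k : ℤ) :
    modD D (r + D * k) = modD D r := by
  have h : (r + D * k) / D = r / D + k := by field_simp
  unfold modD
  rw [h, Int.floor_add_intCast]
  push_cast
  ring

lemma modD_sub_modD {D : ℝ} (hD : 0 < D) (a b : ℝ) :
    modD D (modD D b - modD D a) = modD D (b - a) := by
  have h : modD D b - modD D a = (b - a) + D * ((⌊a / D⌋ - ⌊b / D⌋ : ℤ) : ℝ) := by
    unfold modD; push_cast; ring
  rw [h, modD_add_int hD]

lemma modD_nonneg {D : ℝ} (hD : 0 < D) (r : ℝ) : 0 ≤ modD D r := by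
  have h := (le_div_iff₀ hD).mp (Int.floor_le (r / D))
  unfold modD; linarith

lemma modD_lt {D : ℝ} (hD : 0 < D) (r : ℝ) : modD D r < D := by
  have h := (div_lt_iff₀ hD).mp (Int.lt_floor_add_one (r / D))
  unfold modD; nlinarith

lemma dirX_eq_modD {D x y : ℝ} (hD : 0 < D) (hx0 : 0 ≤ x) (hxD : x < D)
    (hy0 : 0 ≤ y) (hyD : y < D) : dirX D x y = modD D (y - x) := by
  unfold dirX
  split_ifs with h
  · rw [modD_eq_self hD (by linarith) (by linarith)]
  · push_neg at h
    have e : y - x = (D + y - x) + D * ((-1 : ℤ) : ℝ) := by push_cast; ring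
    rw [e, modD_add_int hD, modD_eq_self hD (by linarith) (by linarith)]

lemma uX_val {D p lam c T x0 y0 w vy : ℝ} (hD : 0 < D)
    (hx0 : 0 ≤ x0) (hxD : x0 < D) (hy0 : 0 ≤ y0) (hyD : y0 < D)
    (hg0 : 0 < dirX D x0 y0 + T * (vy - w)) (hgD : dirX D x0 y0 + T * (vy - w) < D) :
    uX D p lam c T x0 y0 w vy = p * lam * (dirX D x0 y0 + T * (vy - w)) - c * T := by
  set g := dirX D x0 y0 + T * (vy - w) with hg
  have hmodxy : modD D (y0 - x0) = dirX D x0 y0 := (dirX_eq_modD hD hx0 hxD hy0 hyD).symm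
  have hsplit : y0 - x0 = dirX D x0 y0 + D * ((⌊(y0 - x0) / D⌋ : ℤ) : ℝ) := by
    rw [← hmodxy]; unfold modD; ring
  have hdiff : (y0 + T * vy) - (x0 + T * w) = g + D * ((⌊(y0 - x0) / D⌋ : ℤ) : ℝ) := by
    rw [hg]; linarith [hsplit]
  have hmdiff : modD D ((y0 + T * vy) - (x0 + T * w)) = g := by
    rw [hdiff, modD_add_int hD, modD_eq_self hD hg0.le hgD]
  have hne : modD D (x0 + T * w) ≠ modD D (y0 + T * vy) := by
    intro hEq
    have h1 := modD_sub_modD hD (x0 + T * w) (y0 + T * vy)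
    rw [hEq, sub_self, hmdiff, modD_eq_self hD le_rfl hD] at h1
    linarith
  unfold uX
  rw [if_pos hne,
    dirX_eq_modD hD (modD_nonneg hD _) (modD_lt hD _) (modD_nonneg hD _) (modD_lt hD _),
    modD_sub_modD hD, hmdiff]

/-- Best reply of player x when overtaking is impossible: if player y drives faster
than v_max − d₀/T, then v_min is the unique best reply of player x. -/
theorem best_reply_x_third_branch
    (D p lam c T vmin vmax x0 y0 d0 d vy : ℝ)
    (hD : 0 < D) (hvmin : 0 < vmin) (hvv : vmin < vmax) (hT : 0 < T)
    (hshort : T * vmax < D / 2)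
    (hp : 0 ≤ p) (hlam : 0 < lam) (hc : 0 ≤ c) (hplam : 0 < p * lam)
    (hx0 : x0 ∈ Set.Ico 0 D) (hy0 : y0 ∈ Set.Ico 0 D)
    (hd0 : d0 = dirX D x0 y0) (hd : d = T * (vmax - vmin))
    (hd0pos : 0 < d0) (hd0d : d0 < d) (hdy : d < dirY D x0 y0)
    (hvy : vy ∈ Set.Icc vmin vmax) (hvyfast : vmax - d0 / T < vy) :
    ∀ w ∈ Set.Icc vmin vmax,
      uX D p lam c T x0 y0 w vy ≤ uX D p lam c T x0 y0 vmin vy ∧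
      (uX D p lam c T x0 y0 w vy = uX D p lam c T x0 y0 vmin vy ↔ w = vmin) := by
  intro w hw
  obtain ⟨hw1, hw2⟩ := hw
  obtain ⟨hvy1, hvy2⟩ := hvy
  -- T * vmax - d0 < T * vy
  have hTd : T * vmax - d0 < T * vy := by
    have h1 := mul_lt_mul_of_pos_left hvyfast hT
    have h2 : T * (d0 / T) = d0 := mul_div_cancel₀ d0 hT.ne'
    rw [mul_sub, h2] at h1
    linarith
  have hval : ∀ u, vmin ≤ u → u ≤ vmax →
      uX D p lam c T x0 y0 u vy = p * lam * (d0 + T * (vy - u)) - c * T := by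
    intro u hu1 hu2
    have hTu : T * u ≤ T * vmax := mul_le_mul_of_nonneg_left hu2 hT.le
    have hTu' : T * vmin ≤ T * u := mul_le_mul_of_nonneg_left hu1 hT.le
    have hTvy : T * vy ≤ T * vmax := mul_le_mul_of_nonneg_left hvy2 hT.le
    have hTvmin : 0 < T * vmin := mul_pos hT hvmin
    have hg0 : 0 < d0 + T * (vy - u) := by rw [mul_sub]; linarith
    have hgD : d0 + T * (vy - u) < D := by
      rw [mul_sub]
      have : d0 < T * vmax - T * vmin := by rw [hd, mul_sub] at hd0d; linarith
      linarith
    rw [hd0] at hg0 hgD ⊢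
    exact uX_val hD hx0.1 hx0.2 hy0.1 hy0.2 hg0 hgD
  rw [hval w hw1 hw2, hval vmin le_rfl hvv.le]
  have hle : d0 + T * (vy - w) ≤ d0 + T * (vy - vmin) := by
    have := mul_le_mul_of_nonneg_left (sub_le_sub_left hw1 vy) hT.le
    linarith
  constructor
  · have := mul_le_mul_of_nonneg_left hle hplam.le
    linarith
  · constructor
    · intro h
      have h2 : p * lam * (d0 + T * (vy - w)) = p * lam * (d0 + T * (vy - vmin)) := by
        linarith
      have h3 := mul_left_cancel₀ hplam.ne' h2
      have h4 : T * (vy - w) = T * (vy - vmin) := by linarith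
      have h5 := mul_left_cancel₀ hT.ne' h4
      linarith
    · rintro rfl; rfl
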